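/- arXiv:1701.06231 — 2 statements merged into one kernel-verified Lean document; each statement's English description precedes it below -/
import Mathlib

section
/- Fix K₁ ∈ (−1,1), K₂ ∈ (0,1) with K₁ < K₂, and let f(s) = (s−K₁)⁺ − (s−K₂)⁺. Define f̄ on the triangle Δ = {(β,γ) : β ≥ 0, γ ≥ 0, β + γ ≤ 1} by f̄(β,γ) := f(2γ + β − 1). Define V on Δ by: V(β,γ) = K₂ − K₁ if 2γ + β − 1 ≥ K₂; V(β,γ) = (2γ+β)(K₂−K₁)/(K₂+1) if γ/(γ+β) ≥ K₂ > 2γ+β−1; V(β,γ) = γ(K₂−K₁)/K₂ if K₂ > γ/(γ+β) and 0 ≤ K₁; V(β,γ) = γ(1−K₁) − βK₁ if K₂ > γ/(γ+β) and 0 > K₁. Then V is concave on Δ and V ≥ f̄ on Δ. -/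
/-!
On the triangle, `V` is the minimum of three affine functions: the constant `K₂ - K₁`, the
plane `(2γ + β)(K₂ - K₁)/(K₂ + 1)`, and a plane through the origin (`γ (K₂ - K₁)/K₂` if
`K₁ ≥ 0`, `γ (1 - K₁) - β K₁` otherwise). The differences of consecutive planes are positive
multiples of `2γ + β - 1 - K₂` and of `γ - K₂ (γ + β)`, so the four regions are exactly where
the respective plane is smallest. A minimum of affine functions is concave, and each plane
dominates `f̄`: in the mean `m = 2γ + β - 1 ∈ [-1, γ]` they are the cap of the call spread, its
chord from `(-1, 0)` to `(K₂, K₂ - K₁)`, and a line through the origin lying above `f` on `[0, ∞)`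
resp. above `(m - K₁)⁺` on the triangle.
-/

open Set

noncomputable section

def callSpread (K₁ K₂ s : ℝ) : ℝ := max (s - K₁) 0 - max (s - K₂) 0

namespace callSpread

variable {K₁ K₂ : ℝ}

lemma le_sub (hK : K₁ ≤ K₂) (s : ℝ) : callSpread K₁ K₂ s ≤ K₂ - K₁ := by
  unfold callSpread
  rcases max_cases (s - K₁) 0 with ⟨h₁, _⟩ | ⟨h₁, _⟩ <;>
    rcases max_cases (s - K₂) 0 with ⟨h₂, _⟩ | ⟨h₂, _⟩ <;> rw [h₁, h₂] <;> linarith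

lemma le_max_sub_zero (s : ℝ) : callSpread K₁ K₂ s ≤ max (s - K₁) 0 :=
  sub_le_self _ (le_max_right _ _)

lemma monotone (hK : K₁ ≤ K₂) : Monotone (callSpread K₁ K₂) := by
  intro s t hst
  unfold callSpread
  rcases max_cases (s - K₁) 0 with ⟨h₁, _⟩ | ⟨h₁, _⟩ <;>
    rcases max_cases (s - K₂) 0 with ⟨h₂, _⟩ | ⟨h₂, _⟩ <;>
    rcases max_cases (t - K₁) 0 with ⟨h₃, _⟩ | ⟨h₃, _⟩ <;>
    rcases max_cases (t - K₂) 0 with ⟨h₄, _⟩ | ⟨h₄, _⟩ <;> rw [h₁, h₂, h₃, h₄] <;> linarith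

lemma le_chord (hK₁ : -1 < K₁) (hK : K₁ ≤ K₂) {s : ℝ} (hs : -1 ≤ s) :
    callSpread K₁ K₂ s ≤ (s + 1) * (K₂ - K₁) / (K₂ + 1) := by
  rw [le_div_iff₀ (by linarith)]
  unfold callSpread
  rcases max_cases (s - K₁) 0 with ⟨h₁, _⟩ | ⟨h₁, _⟩ <;>
    rcases max_cases (s - K₂) 0 with ⟨h₂, _⟩ | ⟨h₂, _⟩ <;> rw [h₁, h₂] <;>
    nlinarith [mul_nonneg (sub_nonneg.2 hK) (by linarith : (0 : ℝ) ≤ s + 1)]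

lemma le_line_of_nonneg (hK₁ : 0 ≤ K₁) (hK : K₁ < K₂) {t : ℝ} (ht : 0 ≤ t) :
    callSpread K₁ K₂ t ≤ t * (K₂ - K₁) / K₂ := by
  rw [le_div_iff₀ (by linarith)]
  unfold callSpread
  rcases max_cases (t - K₁) 0 with ⟨h₁, _⟩ | ⟨h₁, _⟩ <;>
    rcases max_cases (t - K₂) 0 with ⟨h₂, _⟩ | ⟨h₂, _⟩ <;> rw [h₁, h₂] <;>
    nlinarith [mul_nonneg ht (sub_nonneg.2 hK.le)]

end callSpread

lemma ite_ite_eq_min {α : Type*} [LinearOrder α] {P Q : Prop} [Decidable P] [Decidable Q]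
    {a b c : α} (hab : P → a ≤ b) (hba : ¬P → b ≤ a) (hbc : Q → b ≤ c) (hcb : ¬Q → c ≤ b)
    (hPQ : P → Q) :
    (if P then a else if Q then b else c) = min a (min b c) := by
  split_ifs with hP hQ
  · rw [min_eq_left (hbc (hPQ hP)), min_eq_left (hab hP)]
  · rw [min_eq_left (hbc hQ), min_eq_right (hba hP)]
  · rw [min_eq_right (hcb hQ), min_eq_right ((hcb hQ).trans (hba hP))]

def projSimplex : Set (ℝ × ℝ) := {p | 0 ≤ p.1 ∧ 0 ≤ p.2 ∧ p.1 + p.2 ≤ 1}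

lemma convex_projSimplex : Convex ℝ projSimplex :=
  (convex_halfSpace_ge (LinearMap.fst ℝ ℝ ℝ).isLinear 0).inter
    ((convex_halfSpace_ge (LinearMap.snd ℝ ℝ ℝ).isLinear 0).inter
      (convex_halfSpace_le (LinearMap.fst ℝ ℝ ℝ + LinearMap.snd ℝ ℝ ℝ).isLinear 1))

lemma concaveOn_linear_prod {s : Set (ℝ × ℝ)} (hs : Convex ℝ s) (a b : ℝ) :
    ConcaveOn ℝ s fun p => a * p.1 + b * p.2 :=
  (a • LinearMap.fst ℝ ℝ ℝ + b • LinearMap.snd ℝ ℝ ℝ).concaveOn hs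

def chordPlane (K₁ K₂ : ℝ) (p : ℝ × ℝ) : ℝ := (2 * p.2 + p.1) * (K₂ - K₁) / (K₂ + 1)

def lowerPlane (K₁ K₂ : ℝ) (p : ℝ × ℝ) : ℝ :=
  if 0 ≤ K₁ then p.2 * (K₂ - K₁) / K₂ else p.2 * (1 - K₁) - p.1 * K₁

section Planes

variable {K₁ K₂ : ℝ}

lemma concaveOn_chordPlane (K₁ K₂ : ℝ) {s : Set (ℝ × ℝ)} (hs : Convex ℝ s) :
    ConcaveOn ℝ s (chordPlane K₁ K₂) :=
  (concaveOn_linear_prod hs ((K₂ - K₁) / (K₂ + 1)) (2 * ((K₂ - K₁) / (K₂ + 1)))).congr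
    fun p _ => by simp only [chordPlane]; ring

lemma concaveOn_lowerPlane (K₁ K₂ : ℝ) {s : Set (ℝ × ℝ)} (hs : Convex ℝ s) :
    ConcaveOn ℝ s (lowerPlane K₁ K₂) := by
  by_cases hK₁ : 0 ≤ K₁
  · exact (concaveOn_linear_prod hs 0 ((K₂ - K₁) / K₂)).congr
      fun p _ => by simp only [lowerPlane, if_pos hK₁]; ring
  · exact (concaveOn_linear_prod hs (-K₁) (1 - K₁)).congr
      fun p _ => by simp only [lowerPlane, if_neg hK₁]; ring

lemma chordPlane_sub_const (hK₂ : K₂ + 1 ≠ 0) (p : ℝ × ℝ) :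
    chordPlane K₁ K₂ p - (K₂ - K₁) = (2 * p.2 + p.1 - 1 - K₂) * (K₂ - K₁) / (K₂ + 1) := by
  unfold chordPlane
  field_simp
  ring

lemma exists_lowerPlane_sub_chordPlane (hK₁ : -1 < K₁) (hK₂ : 0 < K₂) (hK : K₁ < K₂)
    (p : ℝ × ℝ) : ∃ c, 0 ≤ c ∧
      lowerPlane K₁ K₂ p - chordPlane K₁ K₂ p = c * (p.2 - K₂ * (p.2 + p.1)) := by
  unfold lowerPlane chordPlane
  split_ifs with h
  · refine ⟨(K₂ - K₁) / (K₂ * (K₂ + 1)), div_nonneg (by linarith) (by positivity), ?_⟩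
    field_simp
    ring
  · refine ⟨(1 + K₁) / (K₂ + 1), div_nonneg (by linarith) (by linarith), ?_⟩
    field_simp
    ring

end Planes

section Regions

variable {K₁ K₂ : ℝ} {p : ℝ × ℝ}

lemma ite_regions_eq_min (hK₁ : -1 < K₁) (hK₂ : 0 < K₂) (hK : K₁ < K₂)
    (hp : p ∈ projSimplex) :
    (if K₂ ≤ 2 * p.2 + p.1 - 1 then K₂ - K₁
      else if K₂ ≤ p.2 / (p.2 + p.1) then chordPlane K₁ K₂ p else lowerPlane K₁ K₂ p) =
    min (K₂ - K₁) (min (chordPlane K₁ K₂ p) (lowerPlane K₁ K₂ p)) := by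
  obtain ⟨hβ, hγ, hsum⟩ := hp
  -- at the origin `γ / (γ + β) = 0`, but there `γ = 0` too
  have hratio : p.2 / (p.2 + p.1) * (p.2 + p.1) = p.2 :=
    div_mul_cancel_of_imp fun h => by linarith
  have hγβ : 0 ≤ p.2 + p.1 := by linarith
  have hchord : chordPlane K₁ K₂ p - (K₂ - K₁) =
      (2 * p.2 + p.1 - 1 - K₂) * ((K₂ - K₁) / (K₂ + 1)) := by
    rw [chordPlane_sub_const (by linarith), mul_div_assoc]
  have hslope : 0 < (K₂ - K₁) / (K₂ + 1) := div_pos (by linarith) (by linarith)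
  obtain ⟨c, hc, hlower⟩ := exists_lowerPlane_sub_chordPlane hK₁ hK₂ hK p
  refine ite_ite_eq_min (fun h => ?_) (fun h => ?_) (fun h => ?_) (fun h => ?_) (fun h => ?_)
  · nlinarith
  · nlinarith
  · have := mul_le_mul_of_nonneg_right h hγβ
    rw [hratio] at this
    nlinarith
  · have := mul_le_mul_of_nonneg_right (not_le.1 h).le hγβ
    rw [hratio] at this
    nlinarith
  · calc K₂ ≤ 2 * p.2 + p.1 - 1 := h
      _ ≤ p.2 := by linarith
      _ ≤ p.2 / (p.2 + p.1) := le_div_self hγ (by linarith) (by linarith)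

lemma callSpread_le_chordPlane (hK₁ : -1 < K₁) (hK : K₁ ≤ K₂) (hp : p ∈ projSimplex) :
    callSpread K₁ K₂ (2 * p.2 + p.1 - 1) ≤ chordPlane K₁ K₂ p := by
  have := callSpread.le_chord hK₁ hK (s := 2 * p.2 + p.1 - 1) (by linarith [hp.1, hp.2.1])
  rwa [sub_add_cancel] at this

lemma callSpread_le_lowerPlane (hK₁ : -1 < K₁) (hK : K₁ < K₂) (hp : p ∈ projSimplex) :
    callSpread K₁ K₂ (2 * p.2 + p.1 - 1) ≤ lowerPlane K₁ K₂ p := by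
  obtain ⟨hβ, hγ, hsum⟩ := hp
  unfold lowerPlane
  split_ifs with h
  · calc _ ≤ callSpread K₁ K₂ p.2 := callSpread.monotone hK.le (by linarith)
      _ ≤ _ := callSpread.le_line_of_nonneg h hK hγ
  · refine (callSpread.le_max_sub_zero _).trans (max_le ?_ ?_)
    · nlinarith [mul_nonneg (by linarith : (0 : ℝ) ≤ 1 - p.1 - p.2) (by linarith : 0 ≤ 1 + K₁)]
    · nlinarith [mul_nonneg hγ (by linarith : 0 ≤ 1 - K₁), mul_nonneg hβ (by linarith : 0 ≤ -K₁)]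

end Regions

/-- for the call spread `f(s) = (s−K₁)⁺ − (s−K₂)⁺` with `K₁ ∈ (−1,1)`,
`K₂ ∈ (0,1)`, `K₁ < K₂`, the piecewise function `V` on the triangle
`Δ = {(β,γ) : β,γ ≥ 0, β+γ ≤ 1}` is concave and dominates `f̄(β,γ) = f(2γ+β−1)`. -/
theorem stmt10 (K₁ K₂ : ℝ) (hK₁ : K₁ ∈ Ioo (-1:ℝ) 1) (hK₂ : K₂ ∈ Ioo (0:ℝ) 1) (hK : K₁ < K₂)
    (f : ℝ → ℝ) (hf : ∀ s, f s = max (s - K₁) 0 - max (s - K₂) 0)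
    (Δ : Set (ℝ × ℝ)) (hΔ : Δ = {p | 0 ≤ p.1 ∧ 0 ≤ p.2 ∧ p.1 + p.2 ≤ 1})
    (fbar : ℝ × ℝ → ℝ) (hfbar : ∀ p, fbar p = f (2 * p.2 + p.1 - 1))
    (V : ℝ × ℝ → ℝ)
    (hV : ∀ p : ℝ × ℝ, V p =
      if K₂ ≤ 2 * p.2 + p.1 - 1 then K₂ - K₁
      else if K₂ ≤ p.2 / (p.2 + p.1) then (2 * p.2 + p.1) * (K₂ - K₁) / (K₂ + 1)
      else if 0 ≤ K₁ then p.2 * (K₂ - K₁) / K₂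
      else p.2 * (1 - K₁) - p.1 * K₁) :
    ConcaveOn ℝ Δ V ∧ ∀ p ∈ Δ, fbar p ≤ V p := by
  obtain ⟨hK₁, -⟩ := hK₁
  obtain ⟨hK₂, -⟩ := hK₂
  obtain rfl : Δ = projSimplex := hΔ
  obtain rfl : f = callSpread K₁ K₂ := funext hf
  have hV_eq : EqOn (fun p => min (K₂ - K₁) (min (chordPlane K₁ K₂ p) (lowerPlane K₁ K₂ p)))
      V projSimplex := fun p hp => ((hV p).trans (ite_regions_eq_min hK₁ hK₂ hK hp)).symm
  have hconcave := (concaveOn_const (K₂ - K₁) convex_projSimplex).inf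
    ((concaveOn_chordPlane K₁ K₂ convex_projSimplex).inf
      (concaveOn_lowerPlane K₁ K₂ convex_projSimplex))
  refine ⟨hconcave.congr hV_eq, fun p hp => ?_⟩
  rw [hfbar, ← hV_eq hp]
  exact le_min (callSpread.le_sub hK.le _)
    (le_min (callSpread_le_chordPlane hK₁ hK.le hp) (callSpread_le_lowerPlane hK₁ hK hp))
end
end

section
/- Let V be the piecewise function of the call-spread example on the triangle Δ (four cases as given). Then V is the concave envelope of f̄(β,γ) = (2γ+β−1−K₁)⁺ − (2γ+β−1−K₂)⁺ on Δ; that is, V is concave, V ≥ f̄, and any concave function h on Δ with h ≥ f̄ satisfies h ≥ V. -/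
/-!
On the triangle, `V` coincides with the minimum of three affine functions: the plateau `K₂ - K₁`,
a plane `midPlane` depending only on `2γ + β`, and a plane `basePlane`; hence it is concave, and
each of the three dominates `f̄`. For minimality, the triangle is cut into three pieces on each of
which `V` is the affine interpolation of `f̄` at the vertices of the piece. On the plateau
`f̄ = V` already. On the other two pieces `V ≤ f̄ ≤ h` holds at the vertices, hence inside by
Jensen's inequality for the concave `h` (and the affine `V`).
-/

open Set

theorem ConvexOn.apply_sum_le_of_concaveOn {E : Type*} [AddCommGroup E] [Module ℝ E]
    {s : Set E} {g h : E → ℝ} (hg : ConvexOn ℝ s g) (hh : ConcaveOn ℝ s h) {ι : Type*}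
    {t : Finset ι} {w : ι → ℝ} {p : ι → E} (hw₀ : ∀ i ∈ t, 0 ≤ w i) (hw₁ : ∑ i ∈ t, w i = 1)
    (hp : ∀ i ∈ t, p i ∈ s) (hgh : ∀ i ∈ t, g (p i) ≤ h (p i)) :
    g (∑ i ∈ t, w i • p i) ≤ h (∑ i ∈ t, w i • p i) :=
  calc g (∑ i ∈ t, w i • p i) ≤ ∑ i ∈ t, w i • g (p i) := hg.map_sum_le hw₀ hw₁ hp
    _ ≤ ∑ i ∈ t, w i • h (p i) :=
      Finset.sum_le_sum fun i hi => smul_le_smul_of_nonneg_left (hgh i hi) (hw₀ i hi)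
    _ ≤ h (∑ i ∈ t, w i • p i) := hh.le_map_sum hw₀ hw₁ hp

theorem ConvexOn.apply_le_of_concaveOn_of_triangle {E : Type*} [AddCommGroup E] [Module ℝ E]
    {s : Set E} {g h : E → ℝ} (hg : ConvexOn ℝ s g) (hh : ConcaveOn ℝ s h) {p₁ p₂ p₃ : E}
    (hp₁ : p₁ ∈ s) (hp₂ : p₂ ∈ s) (hp₃ : p₃ ∈ s) (hgh₁ : g p₁ ≤ h p₁)
    (hgh₂ : g p₂ ≤ h p₂) (hgh₃ : g p₃ ≤ h p₃) {a b c : ℝ} (ha : 0 ≤ a) (hb : 0 ≤ b)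
    (hc : 0 ≤ c) (habc : a + b + c = 1) {p : E} (hp : a • p₁ + b • p₂ + c • p₃ = p) :
    g p ≤ h p := by
  subst hp
  simpa [Fin.sum_univ_three] using hg.apply_sum_le_of_concaveOn hh (t := Finset.univ)
    (w := ![a, b, c]) (p := ![p₁, p₂, p₃]) (fun i _ => by fin_cases i <;> assumption)
    (by simpa [Fin.sum_univ_three]) (fun i _ => by fin_cases i <;> assumption)
    (fun i _ => by fin_cases i <;> assumption)

section CallSpread

variable (K₁ K₂ : ℝ)

def triangle : Set (ℝ × ℝ) := {p | 0 ≤ p.1 ∧ 0 ≤ p.2 ∧ p.1 + p.2 ≤ 1}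

theorem convex_triangle : Convex ℝ triangle := by
  rintro ⟨x₁, x₂⟩ ⟨hx₁, hx₂, hx⟩ ⟨y₁, y₂⟩ ⟨hy₁, hy₂, hy⟩ a b ha hb hab
  refine ⟨?_, ?_, ?_⟩ <;> simp only [Prod.smul_mk, Prod.mk_add_mk, smul_eq_mul] <;> nlinarith

def spreadPayoff (p : ℝ × ℝ) : ℝ :=
  max (2 * p.2 + p.1 - 1 - K₁) 0 - max (2 * p.2 + p.1 - 1 - K₂) 0

def linearFn (u v : ℝ) : ℝ × ℝ →ₗ[ℝ] ℝ := u • LinearMap.fst ℝ ℝ ℝ + v • LinearMap.snd ℝ ℝ ℝ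

@[simp]
theorem linearFn_apply (u v : ℝ) (p : ℝ × ℝ) : linearFn u v p = u * p.1 + v * p.2 := rfl

/-- The plane through the origin, `(0, (1 + K₂) / 2)` and `(1 - K₂, K₂)` interpolating
`spreadPayoff`, whose values there are `0`, `K₂ - K₁` and `K₂ - K₁`. -/
noncomputable def midPlane : ℝ × ℝ →ₗ[ℝ] ℝ :=
  linearFn ((K₂ - K₁) / (K₂ + 1)) (2 * (K₂ - K₁) / (K₂ + 1))

/-- The plane through the origin, `(1, 0)` and `(1 - K₂, K₂)` interpolating `spreadPayoff`,
whose values there are `0`, `max (-K₁) 0` and `K₂ - K₁`. -/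
noncomputable def basePlane : ℝ × ℝ →ₗ[ℝ] ℝ :=
  if 0 ≤ K₁ then linearFn 0 ((K₂ - K₁) / K₂) else linearFn (-K₁) (1 - K₁)

noncomputable def envelope (p : ℝ × ℝ) : ℝ :=
  min (min (K₂ - K₁) (midPlane K₁ K₂ p)) (basePlane K₁ K₂ p)

theorem concaveOn_envelope : ConcaveOn ℝ triangle (envelope K₁ K₂) :=
  ((concaveOn_const _ convex_triangle).inf ((midPlane K₁ K₂).concaveOn convex_triangle)).inf
    ((basePlane K₁ K₂).concaveOn convex_triangle)

variable {K₁ K₂}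

theorem spreadPayoff_eq_max_min (hK : K₁ < K₂) (p : ℝ × ℝ) :
    spreadPayoff K₁ K₂ p = max (min (2 * p.2 + p.1 - 1 - K₁) (K₂ - K₁)) 0 := by
  unfold spreadPayoff
  rcases le_total (2 * p.2 + p.1 - 1 - K₂) 0 with h | h
  · rw [max_eq_right h, min_eq_left (by linarith), sub_zero]
  · rw [max_eq_left h, min_eq_right (by linarith), max_eq_left (by linarith),
      max_eq_left (by linarith)]
    ring

theorem spreadPayoff_eq_sub (hK : K₁ < K₂) {p : ℝ × ℝ} (hp : 1 + K₂ ≤ 2 * p.2 + p.1) :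
    spreadPayoff K₁ K₂ p = K₂ - K₁ := by
  rw [spreadPayoff_eq_max_min hK, min_eq_right (by linarith), max_eq_left (by linarith)]

theorem spreadPayoff_eq_zero (hK : K₁ < K₂) {p : ℝ × ℝ} (hp : 2 * p.2 + p.1 ≤ 1 + K₁) :
    spreadPayoff K₁ K₂ p = 0 := by
  rw [spreadPayoff_eq_max_min hK, max_eq_right (min_le_of_left_le (by linarith))]

theorem spreadPayoff_le_sub (hK : K₁ < K₂) (p : ℝ × ℝ) : spreadPayoff K₁ K₂ p ≤ K₂ - K₁ := by
  rw [spreadPayoff_eq_max_min hK]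
  exact max_le (min_le_right _ _) (by linarith)

theorem spreadPayoff_le_midPlane (hK₁ : -1 < K₁) (hK : K₁ < K₂) {p : ℝ × ℝ}
    (hp : 0 ≤ 2 * p.2 + p.1) : spreadPayoff K₁ K₂ p ≤ midPlane K₁ K₂ p := by
  have hmid : midPlane K₁ K₂ p = (2 * p.2 + p.1) * (K₂ - K₁) / (K₂ + 1) := by
    simp only [midPlane, linearFn_apply]; ring
  rw [spreadPayoff_eq_max_min hK, hmid]
  refine max_le ?_ (by apply div_nonneg <;> nlinarith)
  rw [le_div_iff₀ (by linarith)]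
  rcases le_total (2 * p.2 + p.1) (1 + K₂) with h | h
  · nlinarith [min_le_left (2 * p.2 + p.1 - 1 - K₁) (K₂ - K₁)]
  · nlinarith [min_le_right (2 * p.2 + p.1 - 1 - K₁) (K₂ - K₁)]

theorem spreadPayoff_le_basePlane (hK₁ : -1 < K₁) (hK₂ : 0 < K₂) (hK : K₁ < K₂)
    {p : ℝ × ℝ} (hp : p ∈ triangle) : spreadPayoff K₁ K₂ p ≤ basePlane K₁ K₂ p := by
  obtain ⟨hβ, hγ, hβγ⟩ := hp
  rw [spreadPayoff_eq_max_min hK, basePlane]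
  split_ifs with h₀
  · rw [linearFn_apply, zero_mul, zero_add, div_mul_eq_mul_div]
    refine max_le ?_ (by positivity)
    rw [le_div_iff₀ hK₂]
    rcases le_total p.2 K₂ with h | h
    · nlinarith [min_le_left (2 * p.2 + p.1 - 1 - K₁) (K₂ - K₁)]
    · nlinarith [min_le_right (2 * p.2 + p.1 - 1 - K₁) (K₂ - K₁)]
  · rw [linearFn_apply]
    refine max_le ?_ (by nlinarith)
    nlinarith [min_le_left (2 * p.2 + p.1 - 1 - K₁) (K₂ - K₁)]

theorem spreadPayoff_le_envelope (hK₁ : -1 < K₁) (hK₂ : 0 < K₂) (hK : K₁ < K₂)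
    {p : ℝ × ℝ} (hp : p ∈ triangle) : spreadPayoff K₁ K₂ p ≤ envelope K₁ K₂ p :=
  le_min (le_min (spreadPayoff_le_sub hK p)
    (spreadPayoff_le_midPlane hK₁ hK (by linarith [hp.1, hp.2.1])))
    (spreadPayoff_le_basePlane hK₁ hK₂ hK hp)

theorem sub_le_midPlane_iff (hK₂ : -1 < K₂) (hK : K₁ < K₂) {p : ℝ × ℝ} :
    K₂ - K₁ ≤ midPlane K₁ K₂ p ↔ 1 + K₂ ≤ 2 * p.2 + p.1 := by
  have hdiff : midPlane K₁ K₂ p - (K₂ - K₁) =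
      (K₂ - K₁) / (K₂ + 1) * (2 * p.2 + p.1 - (1 + K₂)) := by
    have : K₂ + 1 ≠ 0 := by linarith
    simp only [midPlane, linearFn_apply]; field_simp; ring
  rw [← sub_nonneg, hdiff, mul_nonneg_iff_of_pos_left (by apply div_pos <;> linarith),
    sub_nonneg]

theorem basePlane_sub_midPlane (hK₁ : -1 < K₁) (hK₂ : 0 < K₂) (hK : K₁ < K₂) :
    ∃ c > 0, ∀ p : ℝ × ℝ,
      basePlane K₁ K₂ p - midPlane K₁ K₂ p = c * (p.2 - K₂ * (p.2 + p.1)) := by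
  unfold basePlane midPlane
  split_ifs with h₀
  · refine ⟨(K₂ - K₁) / (K₂ * (K₂ + 1)), div_pos (by linarith) (by positivity), fun p => ?_⟩
    simp only [linearFn_apply]; field_simp; ring
  · refine ⟨(1 + K₁) / (K₂ + 1), div_pos (by linarith) (by linarith), fun p => ?_⟩
    simp only [linearFn_apply]; field_simp; ring

theorem envelope_eq_ite (hK₁ : -1 < K₁) (hK₂ : 0 < K₂) (hK : K₁ < K₂) {p : ℝ × ℝ}
    (hp : p ∈ triangle) :
    envelope K₁ K₂ p =
      if K₂ ≤ 2 * p.2 + p.1 - 1 then K₂ - K₁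
      else if K₂ ≤ p.2 / (p.2 + p.1) then (2 * p.2 + p.1) * (K₂ - K₁) / (K₂ + 1)
      else if 0 ≤ K₁ then p.2 * (K₂ - K₁) / K₂
      else p.2 * (1 - K₁) - p.1 * K₁ := by
  obtain ⟨hβ, hγ, hβγ⟩ := hp
  have hmid : midPlane K₁ K₂ p = (2 * p.2 + p.1) * (K₂ - K₁) / (K₂ + 1) := by
    simp only [midPlane, linearFn_apply]; ring
  have hbase : basePlane K₁ K₂ p =
      if 0 ≤ K₁ then p.2 * (K₂ - K₁) / K₂ else p.2 * (1 - K₁) - p.1 * K₁ := by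
    unfold basePlane; split_ifs <;> simp only [linearFn_apply] <;> ring
  obtain ⟨c, hc, hdiff⟩ := basePlane_sub_midPlane hK₁ hK₂ hK
  have hms (h₁ : ¬K₂ ≤ 2 * p.2 + p.1 - 1) : midPlane K₁ K₂ p ≤ K₂ - K₁ :=
    le_of_not_ge fun h => h₁ (by linarith [(sub_le_midPlane_iff (by linarith) hK).1 h])
  rw [← hmid, ← hbase, envelope]
  split_ifs with h₁ h₂
  · have hγ₂ : K₂ * (p.2 + p.1) ≤ p.2 := by nlinarith
    have hmb : midPlane K₁ K₂ p ≤ basePlane K₁ K₂ p :=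
      sub_nonneg.1 (hdiff p ▸ mul_nonneg hc.le (sub_nonneg.2 hγ₂))
    have hsm : K₂ - K₁ ≤ midPlane K₁ K₂ p :=
      (sub_le_midPlane_iff (by linarith) hK).2 (by linarith)
    rw [min_eq_left hsm, min_eq_left (hsm.trans hmb)]
  · have hγ₂ : K₂ * (p.2 + p.1) ≤ p.2 := mul_le_of_le_div₀ hγ (by positivity) h₂
    have hmb : midPlane K₁ K₂ p ≤ basePlane K₁ K₂ p :=
      sub_nonneg.1 (hdiff p ▸ mul_nonneg hc.le (sub_nonneg.2 hγ₂))
    rw [min_eq_right (hms h₁), min_eq_left hmb]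
  · have hγ₂ : p.2 ≤ K₂ * (p.2 + p.1) := by
      -- at the origin the junk value `p.2 / 0 = 0` puts `p` in this branch
      rcases (add_nonneg hγ hβ).eq_or_lt with h₀ | hpos
      · rw [← h₀]; linarith
      · exact ((div_lt_iff₀ hpos).1 (not_le.1 h₂)).le
    have hbm : basePlane K₁ K₂ p ≤ midPlane K₁ K₂ p :=
      sub_nonpos.1 (hdiff p ▸ mul_nonpos_of_nonneg_of_nonpos hc.le (sub_nonpos.2 hγ₂))
    rw [min_eq_right (hms h₁), min_eq_right hbm]

section Minimality

variable {h : ℝ × ℝ → ℝ}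

theorem midPlane_le_of_concaveOn (hh : ConcaveOn ℝ triangle h)
    (hfh : ∀ q ∈ triangle, spreadPayoff K₁ K₂ q ≤ h q) (hK₁ : -1 < K₁) (hK₂ : 0 < K₂)
    (hK₂' : K₂ < 1) (hK : K₁ < K₂) {p : ℝ × ℝ} (hp : p ∈ triangle)
    (hs : 2 * p.2 + p.1 ≤ 1 + K₂) (hγ : K₂ * (p.2 + p.1) ≤ p.2) :
    midPlane K₁ K₂ p ≤ h p := by
  obtain ⟨hβ, -, -⟩ := hp
  have hK₂₁ : 0 < 1 - K₂ := by linarith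
  have hmem₀ : ((0 : ℝ), (0 : ℝ)) ∈ triangle := ⟨le_rfl, le_rfl, by norm_num⟩
  have hmem₁ : ((0 : ℝ), (1 + K₂) / 2) ∈ triangle := ⟨le_rfl, by linarith, by linarith⟩
  have hmem₂ : (1 - K₂, K₂) ∈ triangle := ⟨hK₂₁.le, hK₂.le, by simp⟩
  refine ((midPlane K₁ K₂).convexOn convex_triangle).apply_le_of_concaveOn_of_triangle hh
    hmem₀ hmem₁ hmem₂ ((le_of_eq ?_).trans (hfh _ hmem₀))
    ((le_of_eq ?_).trans (hfh _ hmem₁)) ((le_of_eq ?_).trans (hfh _ hmem₂))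
    (a := 1 - (2 * p.2 + p.1) / (1 + K₂))
    (b := 2 * (p.2 - K₂ * (p.2 + p.1)) / ((1 - K₂) * (1 + K₂)))
    (c := p.1 / (1 - K₂)) ?_ ?_ (by positivity) ?_ ?_
  · rw [spreadPayoff_eq_zero hK (by norm_num; linarith)]; exact map_zero _
  · rw [spreadPayoff_eq_sub hK (by dsimp only; linarith)]
    simp only [midPlane, linearFn_apply]; field_simp; ring
  · rw [spreadPayoff_eq_sub hK (by dsimp only; linarith)]
    simp only [midPlane, linearFn_apply]; field_simp; ring
  · rw [sub_nonneg, div_le_one (by linarith)]; exact hs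
  · apply div_nonneg <;> nlinarith
  · field_simp; ring
  · simp only [Prod.smul_mk, smul_eq_mul, mul_zero, Prod.mk_add_mk, add_zero, zero_add]
    exact Prod.ext (by field_simp) (by field_simp; ring)

theorem basePlane_le_of_concaveOn (hh : ConcaveOn ℝ triangle h)
    (hfh : ∀ q ∈ triangle, spreadPayoff K₁ K₂ q ≤ h q) (hK₁ : -1 < K₁) (hK₂ : 0 < K₂)
    (hK₂' : K₂ < 1) (hK : K₁ < K₂) {p : ℝ × ℝ} (hp : p ∈ triangle)
    (hγ : p.2 ≤ K₂ * (p.2 + p.1)) : basePlane K₁ K₂ p ≤ h p := by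
  obtain ⟨hβ, hγ₀, hβγ⟩ := hp
  have hmem₀ : ((0 : ℝ), (0 : ℝ)) ∈ triangle := ⟨le_rfl, le_rfl, by norm_num⟩
  have hmem₁ : ((1 : ℝ), (0 : ℝ)) ∈ triangle := ⟨zero_le_one, le_rfl, by norm_num⟩
  have hmem₂ : (1 - K₂, K₂) ∈ triangle := ⟨by linarith, hK₂.le, by simp⟩
  refine ((basePlane K₁ K₂).convexOn convex_triangle).apply_le_of_concaveOn_of_triangle hh
    hmem₀ hmem₁ hmem₂ ((le_of_eq ?_).trans (hfh _ hmem₀)) (le_trans ?_ (hfh _ hmem₁))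
    ((le_of_eq ?_).trans (hfh _ hmem₂))
    (a := 1 - p.1 - p.2) (b := p.1 - (1 - K₂) * p.2 / K₂) (c := p.2 / K₂)
    (by linarith) ?_ (by positivity) ?_ ?_
  · rw [spreadPayoff_eq_zero hK (by norm_num; linarith)]; exact map_zero _
  · rw [spreadPayoff_eq_max_min hK]
    unfold basePlane
    split_ifs <;> simp only [linearFn_apply]
    · exact le_max_of_le_right (by linarith)
    · exact le_max_of_le_left (le_min (by linarith) (by linarith))
  · rw [spreadPayoff_eq_sub hK (by dsimp only; linarith)]
    unfold basePlane
    split_ifs <;> simp only [linearFn_apply] <;> field_simp <;> ring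
  · rw [sub_nonneg, div_le_iff₀ hK₂]; nlinarith
  · field_simp; ring
  · simp only [Prod.smul_mk, smul_eq_mul, mul_zero, mul_one, Prod.mk_add_mk, zero_add,
      add_zero]
    exact Prod.ext (by field_simp; ring) (by field_simp)

theorem envelope_le_of_concaveOn (hh : ConcaveOn ℝ triangle h)
    (hfh : ∀ q ∈ triangle, spreadPayoff K₁ K₂ q ≤ h q) (hK₁ : -1 < K₁) (hK₂ : 0 < K₂)
    (hK₂' : K₂ < 1) (hK : K₁ < K₂) {p : ℝ × ℝ} (hp : p ∈ triangle) :
    envelope K₁ K₂ p ≤ h p := by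
  by_cases hs : 1 + K₂ ≤ 2 * p.2 + p.1
  · exact (min_le_left _ _).trans <| (min_le_left _ _).trans <|
      (spreadPayoff_eq_sub hK hs).ge.trans (hfh p hp)
  by_cases hγ : K₂ * (p.2 + p.1) ≤ p.2
  · exact (min_le_left _ _).trans <| (min_le_right _ _).trans <|
      midPlane_le_of_concaveOn hh hfh hK₁ hK₂ hK₂' hK hp (not_le.1 hs).le hγ
  · exact (min_le_right _ _).trans <|
      basePlane_le_of_concaveOn hh hfh hK₁ hK₂ hK₂' hK hp (not_le.1 hγ).le

end Minimality

end CallSpread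

/-- the piecewise value function `V` of the call spread example is the concave
envelope of `f̄(β,γ) = (2γ+β−1−K₁)⁺ − (2γ+β−1−K₂)⁺` on the triangle `Δ`: it is concave,
dominates `f̄`, and every concave `h ≥ f̄` on `Δ` satisfies `h ≥ V` on `Δ`. -/
theorem stmt12 (K₁ K₂ : ℝ) (hK₁ : K₁ ∈ Ioo (-1:ℝ) 1) (hK₂ : K₂ ∈ Ioo (0:ℝ) 1) (hK : K₁ < K₂)
    (Δ : Set (ℝ × ℝ)) (hΔ : Δ = {p | 0 ≤ p.1 ∧ 0 ≤ p.2 ∧ p.1 + p.2 ≤ 1})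
    (fbar : ℝ × ℝ → ℝ)
    (hfbar : ∀ p : ℝ × ℝ, fbar p =
      max (2 * p.2 + p.1 - 1 - K₁) 0 - max (2 * p.2 + p.1 - 1 - K₂) 0)
    (V : ℝ × ℝ → ℝ)
    (hV : ∀ p : ℝ × ℝ, V p =
      if K₂ ≤ 2 * p.2 + p.1 - 1 then K₂ - K₁
      else if K₂ ≤ p.2 / (p.2 + p.1) then (2 * p.2 + p.1) * (K₂ - K₁) / (K₂ + 1)
      else if 0 ≤ K₁ then p.2 * (K₂ - K₁) / K₂
      else p.2 * (1 - K₁) - p.1 * K₁) :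
    ConcaveOn ℝ Δ V ∧ (∀ p ∈ Δ, fbar p ≤ V p) ∧
      ∀ h : ℝ × ℝ → ℝ, ConcaveOn ℝ Δ h → (∀ p ∈ Δ, fbar p ≤ h p) →
        ∀ p ∈ Δ, V p ≤ h p := by
  obtain ⟨hK₁, -⟩ := hK₁
  obtain ⟨hK₂, hK₂'⟩ := hK₂
  obtain rfl : Δ = triangle := hΔ
  obtain rfl : fbar = spreadPayoff K₁ K₂ := funext hfbar
  have hVenv : EqOn (envelope K₁ K₂) V triangle := fun p hp => by
    rw [hV, envelope_eq_ite hK₁ hK₂ hK hp]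
  refine ⟨(concaveOn_envelope K₁ K₂).congr hVenv, fun p hp => ?_, fun h hh hfh p hp => ?_⟩
  · exact hVenv hp ▸ spreadPayoff_le_envelope hK₁ hK₂ hK hp
  · exact hVenv hp ▸ envelope_le_of_concaveOn hh hfh hK₁ hK₂ hK₂' hK hp
end
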